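/- arXiv:1412.2323 — 3 statements merged into one kernel-verified Lean document; each statement's English description precedes it below -/
import Mathlib

section
/- Let A and B be convex subsets of ℝⁿ and C a compact subset of ℝⁿ. If B + C ⊆ A + C (Minkowski sums), then B ⊆ A. -/
open scoped Pointwise

/-!
Induct on the dimension of the span of `A - b`. If `b ∉ A`, some functional `f` satisfies
`f ≤ f b` on `A` without being constant on `A`. Let `c` maximize `f` on `C`; comparing values of
`f` in `b + x = a + y` shows that the inclusion `b + C ⊆ A + C` restricts to the faces
`A ∩ {f = f b}` and `C ∩ {f = f c}`, where the dimension has dropped, so `b ∈ A` after all.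
-/

open Set Module

section AddCommGroup

variable {E : Type*} [AddCommGroup E]

theorem vadd_inter_preimage_subset_add {F : Type*} [FunLike F E ℝ] [AddMonoidHomClass F E ℝ]
    (f : F) {A C : Set E} {b c : E} (hA : ∀ a ∈ A, f a ≤ f b) (hC : ∀ y ∈ C, f y ≤ f c)
    (h : b +ᵥ C ⊆ A + C) :
    b +ᵥ (C ∩ f ⁻¹' {f c}) ⊆ (A ∩ f ⁻¹' {f b}) + (C ∩ f ⁻¹' {f c}) := by
  rintro _ ⟨x, ⟨hx, hfx⟩, rfl⟩
  obtain ⟨a, ha, y, hy, hay⟩ := h (vadd_mem_vadd_set hx)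
  replace hay : a + y = b + x := hay
  have hsum : f a + f y = f b + f c := by
    rw [← map_add, hay, map_add, mem_preimage.1 hfx]
  have hfa := hA a ha
  have hfy := hC y hy
  exact ⟨a, ⟨ha, by simp only [mem_preimage, mem_singleton_iff]; linarith⟩,
    y, ⟨hy, by simp only [mem_preimage, mem_singleton_iff]; linarith⟩, hay⟩

theorem span_sub_image_lt_of_subset {K : Type*} [Field K] [Module K E] (f : E →ₗ[K] K)
    {A A' : Set E} {a b : E} (hA' : A' ⊆ A) (hfA' : ∀ x ∈ A', f x = f b) (ha : a ∈ A)
    (hfa : f a ≠ f b) :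
    Submodule.span K ((· - b) '' A') < Submodule.span K ((· - b) '' A) := by
  have hker : Submodule.span K ((· - b) '' A') ≤ LinearMap.ker f := by
    rw [Submodule.span_le]
    rintro _ ⟨x, hx, rfl⟩
    simp [hfA' x hx]
  refine SetLike.lt_iff_le_and_exists.2
    ⟨Submodule.span_mono (image_mono hA'), a - b, Submodule.subset_span ⟨a, ha, rfl⟩,
      fun hmem => hfa (sub_eq_zero.1 ?_)⟩
  simpa using hker hmem

end AddCommGroup

theorem LinearMap.map_eq_zero_of_forall_map_add_smul_le {E : Type*} [AddCommGroup E]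
    [Module ℝ E] (f : E →ₗ[ℝ] ℝ) {x v : E} {r : ℝ} (h : ∀ s : ℝ, f (x + s • v) ≤ r) :
    f v = 0 := by
  by_contra hv
  have := h ((r - f x + 1) / f v)
  rw [map_add, map_smul, smul_eq_mul, div_mul_cancel₀ _ hv] at this
  linarith

section FiniteDimensional

variable {E : Type*} [NormedAddCommGroup E] [NormedSpace ℝ E] [FiniteDimensional ℝ E]

theorem Convex.exists_ne_zero_forall_le_of_notMem {K : Set E} {x : E} (hK : Convex ℝ K)
    (hKne : K.Nonempty) (hx : x ∉ K) :
    ∃ f : StrongDual ℝ E, f ≠ 0 ∧ ∀ k ∈ K, f k ≤ f x := by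
  by_cases hint : (interior K).Nonempty
  · exact geometric_hahn_banach_of_nonempty_interior_point hK (hx <| interior_subset ·) hint
  obtain ⟨k₀, hk₀⟩ := hKne
  have hspan : vectorSpan ℝ K < ⊤ := by
    rwa [lt_top_iff_ne_top, ne_eq,
      ← AffineSubspace.affineSpan_eq_top_iff_vectorSpan_eq_top_of_nonempty ℝ E E ⟨k₀, hk₀⟩,
      ← hK.interior_nonempty_iff_affineSpan_eq_top]
  obtain ⟨g, hg0, hg⟩ := (vectorSpan ℝ K).exists_le_ker_of_lt_top hspan
  have hconst : ∀ k ∈ K, g k = g k₀ := fun k hk => by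
    simpa [sub_eq_zero] using hg (vsub_mem_vectorSpan ℝ hk hk₀)
  have hf0 : LinearMap.toContinuousLinearMap g ≠ 0 := by simpa using hg0
  rcases le_total (g k₀) (g x) with hle | hle
  · exact ⟨_, hf0, fun k hk => (hconst k hk).trans_le hle⟩
  · exact ⟨-_, neg_ne_zero.2 hf0, fun k hk => by simpa [hconst k hk] using hle⟩

theorem Convex.exists_forall_le_exists_lt_of_notMem {A : Set E} {b : E} (hA : Convex ℝ A)
    (hAne : A.Nonempty) (hb : b ∉ A) :
    ∃ f : StrongDual ℝ E, (∀ a ∈ A, f a ≤ f b) ∧ ∃ a ∈ A, f a < f b := by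
  -- Adding a complement `T` of the span of `A - b` makes `A` full-dimensional while still
  -- missing `b`; a functional bounded above on `A + T` kills `T`, hence is not constant on `A`.
  set S := Submodule.span ℝ ((· - b) '' A)
  obtain ⟨T, hST⟩ := S.exists_isCompl
  have hbK : b ∉ A + (T : Set E) := by
    rintro ⟨a, ha, t, ht, hat⟩
    have htS : t ∈ S := by
      simpa [← hat] using S.neg_mem (Submodule.subset_span ⟨a, ha, rfl⟩ : a - b ∈ S)
    obtain rfl : t = 0 := Submodule.disjoint_def.1 hST.disjoint t htS ht
    exact hb (by simpa [← hat] using ha)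
  obtain ⟨f, hf0, hf⟩ :=
    (hA.add T.convex).exists_ne_zero_forall_le_of_notMem (hAne.add ⟨0, T.zero_mem⟩) hbK
  have hfA : ∀ a ∈ A, f a ≤ f b := fun a ha => hf a ⟨a, ha, 0, T.zero_mem, add_zero a⟩
  obtain ⟨a₀, ha₀⟩ := hAne
  have hT : T ≤ LinearMap.ker (f : E →ₗ[ℝ] ℝ) := fun t ht =>
    (f : E →ₗ[ℝ] ℝ).map_eq_zero_of_forall_map_add_smul_le
      fun s => hf _ ⟨a₀, ha₀, s • t, T.smul_mem s ht, rfl⟩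
  have hS : ¬ S ≤ LinearMap.ker (f : E →ₗ[ℝ] ℝ) := fun hS =>
    hf0 (ContinuousLinearMap.ext fun v => by simpa using (hST.sup_eq_top ▸ sup_le hS hT) trivial)
  obtain ⟨a, ha, hfa⟩ : ∃ a ∈ A, f a ≠ f b := by
    by_contra! h
    exact hS (Submodule.span_le.2 (by rintro _ ⟨a, ha, rfl⟩; simp [h a ha]))
  exact ⟨f, hfA, a, ha, (hfA a ha).lt_of_ne hfa⟩

theorem Convex.mem_of_vadd_subset_add {A C : Set E} {b : E} (hA : Convex ℝ A)
    (hC : IsCompact C) (hCne : C.Nonempty) (h : b +ᵥ C ⊆ A + C) : b ∈ A := by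
  induction hd : finrank ℝ (Submodule.span ℝ ((· - b) '' A)) using Nat.strong_induction_on
    generalizing A C with
  | _ d ih =>
  by_contra hb
  obtain ⟨c₀, hc₀⟩ := hCne
  obtain ⟨a₀, ha₀, -⟩ := h (vadd_mem_vadd_set hc₀)
  obtain ⟨f, hfA, a, ha, hfa⟩ := hA.exists_forall_le_exists_lt_of_notMem ⟨a₀, ha₀⟩ hb
  obtain ⟨c, hc, hfc⟩ := hC.exists_isMaxOn ⟨c₀, hc₀⟩ f.continuous.continuousOn
  have hdrop := Submodule.finrank_lt_finrank_of_lt <|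
    span_sub_image_lt_of_subset (f : E →ₗ[ℝ] ℝ) inter_subset_left (fun _ hx => hx.2) ha hfa.ne
  have hA' : Convex ℝ (A ∩ f ⁻¹' {f b}) := hA.inter (convex_hyperplane f.isLinear (f b))
  have hC' : IsCompact (C ∩ f ⁻¹' {f c}) :=
    hC.inter_right (isClosed_singleton.preimage f.continuous)
  have hface := vadd_inter_preimage_subset_add f hfA hfc h
  exact hb (ih _ (hd ▸ hdrop) hA' hC' ⟨c, hc, rfl⟩ hface rfl).1

end FiniteDimensional

theorem minkowski_cancellation_general {n : ℕ}
    (A B C : Set (EuclideanSpace ℝ (Fin n)))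
    (hA : Convex ℝ A)
    (hC : IsCompact C) (hCne : C.Nonempty)
    (h : B + C ⊆ A + C) : B ⊆ A :=
  fun _ hb => hA.mem_of_vadd_subset_add hC hCne ((vadd_set_subset_add hb).trans h)

/-- Minkowski-sum cancellation: if `B + C ⊆ A + C` with `A`, `B` convex and
`C` compact nonempty in `ℝⁿ`, then `B ⊆ A`. -/
theorem minkowski_cancellation {n : ℕ}
    (A B C : Set (EuclideanSpace ℝ (Fin n)))
    (hA : Convex ℝ A) (hB : Convex ℝ B)
    (hC : IsCompact C) (hCne : C.Nonempty)
    (h : B + C ⊆ A + C) : B ⊆ A :=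
  minkowski_cancellation_general A B C hA hC hCne h
end

section
/- Let P be a polynomial of degree at most m and f continuous on [a,b]. If the deviation g = P - f admits m+2 alternating extreme points on [a,b] with E = sup|g| > 0, then for every polynomial Q of degree at most m, sup_{t∈[a,b]} |Q(t) - f(t)| ≥ E; i.e., P is a best Chebyshev approximation to f among polynomials of degree at most m. -/
/-! If some `Q` of degree at most `m` had `sup |Q - f| < E` on `[a, b]`, then at each alternation
point `P - Q = (P - f) - (Q - f)` would have the sign of `σ (-1)^i`, since `|P - f| = E` there.
So `P - Q` would change sign `m + 1` times, hence have `m + 1` distinct roots by the intermediate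
value theorem, while being a nonzero polynomial of degree at most `m`. -/

open Polynomial Set

lemma exists_mem_Ioo_eq_zero_of_mul_neg {g : ℝ → ℝ} {a b : ℝ} (hab : a ≤ b)
    (hg : ContinuousOn g (Icc a b)) (h : g a * g b < 0) : ∃ x ∈ Ioo a b, g x = 0 := by
  rcases mul_neg_iff.mp h with ⟨ha, hb⟩ | ⟨ha, hb⟩
  · exact intermediate_value_Ioo' hab hg ⟨hb, ha⟩
  · exact intermediate_value_Ioo hab hg ⟨ha, hb⟩

lemma exists_strictMono_zeros_of_sign_changes {g : ℝ → ℝ} (hg : Continuous g) {n : ℕ}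
    {t : Fin (n + 1) → ℝ} (ht : StrictMono t)
    (hchange : ∀ i : Fin n, g (t i.castSucc) * g (t i.succ) < 0) :
    ∃ r : Fin n → ℝ, StrictMono r ∧ ∀ i, g (r i) = 0 := by
  choose r hr hzero using fun i : Fin n =>
    exists_mem_Ioo_eq_zero_of_mul_neg (ht Fin.castSucc_lt_succ).le hg.continuousOn (hchange i)
  refine ⟨r, fun i j hij => ?_, hzero⟩
  calc r i < t i.succ := (hr i).2
    _ ≤ t j.castSucc := ht.monotone (Fin.succ_le_castSucc_iff.mpr hij)
    _ < r j := (hr j).1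

theorem Polynomial.le_natDegree_of_sign_changes {p : ℝ[X]} {n : ℕ} {t : Fin (n + 1) → ℝ}
    (ht : StrictMono t) (hchange : ∀ i : Fin n, p.eval (t i.castSucc) * p.eval (t i.succ) < 0) :
    n ≤ p.natDegree := by
  obtain _ | n := n
  · exact Nat.zero_le _
  obtain ⟨r, hr, hroot⟩ := exists_strictMono_zeros_of_sign_changes p.continuous ht hchange
  by_contra! hlt
  have hp : p = 0 :=
    eq_zero_of_natDegree_lt_card_of_eval_eq_zero p hr.injective hroot (by simpa using hlt)
  simpa [hp] using hchange 0

lemma mul_neg_of_alternating_sign {n : ℕ} {x : Fin (n + 1) → ℝ} {σ : ℝ}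
    (h : ∀ i : Fin (n + 1), 0 < σ * (-1) ^ (i : ℕ) * x i) (i : Fin n) :
    x i.castSucc * x i.succ < 0 := by
  have hprod := mul_pos (h i.castSucc) (h i.succ)
  simp only [Fin.val_castSucc, Fin.val_succ, pow_succ] at hprod
  by_contra! hxy
  have hsq := mul_nonneg (sq_nonneg (σ * (-1) ^ (i : ℕ))) hxy
  linarith [show σ * (-1) ^ (i : ℕ) * x i.castSucc * (σ * ((-1) ^ (i : ℕ) * -1) * x i.succ)
      = -((σ * (-1) ^ (i : ℕ)) ^ 2 * (x i.castSucc * x i.succ)) by ring]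

theorem chebyshev_alternation_sufficiency_general
    (a b : ℝ) (m : ℕ)
    (P : Polynomial ℝ) (hP : P.natDegree ≤ m)
    (f : ℝ → ℝ) (hf : ContinuousOn f (Set.Icc a b))
    (E : ℝ)
    (t : Fin (m + 2) → ℝ) (ht : StrictMono t)
    (htmem : ∀ i, t i ∈ Set.Icc a b)
    (σ : ℝ) (hσ : σ = 1 ∨ σ = -1)
    (halt : ∀ i : Fin (m + 2),
      σ * (-1 : ℝ) ^ (i : ℕ) * (P.eval (t i) - f (t i)) = E) :
    ∀ Q : Polynomial ℝ, Q.natDegree ≤ m →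
      E ≤ sSup ((fun x => |Q.eval x - f x|) '' Set.Icc a b) := by
  intro Q hQ
  by_contra! hlt
  have hbdd : BddAbove ((fun x => |Q.eval x - f x|) '' Icc a b) :=
    (isCompact_Icc.image_of_continuousOn (Q.continuous.continuousOn.sub hf).abs).bddAbove
  have hsign : ∀ i : Fin (m + 2), 0 < σ * (-1) ^ (i : ℕ) * (P - Q).eval (t i) := by
    intro i
    have hQi : |Q.eval (t i) - f (t i)| < E :=
      (le_csSup hbdd (mem_image_of_mem _ (htmem i))).trans_lt hlt
    have hunit : |σ * (-1 : ℝ) ^ (i : ℕ)| = 1 := by rcases hσ with rfl | rfl <;> simp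
    have hle := le_abs_self (σ * (-1) ^ (i : ℕ) * (Q.eval (t i) - f (t i)))
    rw [abs_mul, hunit, one_mul] at hle
    have hsplit : σ * (-1) ^ (i : ℕ) * (P - Q).eval (t i)
        = E - σ * (-1) ^ (i : ℕ) * (Q.eval (t i) - f (t i)) := by
      rw [← halt i, eval_sub]; ring
    linarith
  have hdeg : (P - Q).natDegree ≤ m := (natDegree_sub_le P Q).trans (max_le hP hQ)
  have hchange := mul_neg_of_alternating_sign (x := fun i => (P - Q).eval (t i)) hsign
  have := le_natDegree_of_sign_changes ht hchange
  omega

/-- Chebyshev alternation sufficiency: if `P - f` admits `m+2` alternating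
extreme points on `[a,b]`, then `P` is a best approximation to `f` among
polynomials of degree at most `m`. -/
theorem chebyshev_alternation_sufficiency
    (a b : ℝ) (hab : a ≤ b) (m : ℕ)
    (P : Polynomial ℝ) (hP : P.natDegree ≤ m)
    (f : ℝ → ℝ) (hf : ContinuousOn f (Set.Icc a b))
    (E : ℝ) (hEpos : 0 < E)
    (hsup : ∀ x ∈ Set.Icc a b, |P.eval x - f x| ≤ E)
    (t : Fin (m + 2) → ℝ) (ht : StrictMono t)
    (htmem : ∀ i, t i ∈ Set.Icc a b)
    (σ : ℝ) (hσ : σ = 1 ∨ σ = -1)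
    (halt : ∀ i : Fin (m + 2),
      σ * (-1 : ℝ) ^ (i : ℕ) * (P.eval (t i) - f (t i)) = E) :
    ∀ Q : Polynomial ℝ, Q.natDegree ≤ m →
      E ≤ sSup ((fun x => |Q.eval x - f x|) '' Set.Icc a b) :=
  chebyshev_alternation_sufficiency_general a b m P hP f hf E t ht htmem σ hσ halt
end

section
/- Let t₁ < t₂ < ... < t_{m+2} be distinct real numbers and let v_i = (1, t_i, ..., t_i^m) ∈ ℝ^{m+1}. Then 0 lies in the convex hull of {(-1)^i v_i : i = 1,...,m+2}, and moreover the coefficients λ_i of any convex combination representing 0 are all strictly positive and unique. -/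
open Matrix Finset

namespace ZeroHullAux

variable {m : ℕ}

/-- Minor determinant: Vandermonde determinant of the nodes omitting `i`. -/
noncomputable def Dm (t : Fin (m + 2) → ℝ) (i : Fin (m + 2)) : ℝ :=
  (Matrix.vandermonde fun l : Fin (m + 1) => t (i.succAbove l)).det

lemma Dm_pos {t : Fin (m + 2) → ℝ} (ht : StrictMono t) (i : Fin (m + 2)) :
    0 < Dm t i := by
  rw [Dm, Matrix.det_vandermonde]
  refine Finset.prod_pos fun k _ => Finset.prod_pos fun l hl => ?_
  have hkl : k < l := Finset.mem_Ioi.mp hl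
  exact sub_pos.mpr (ht ((Fin.strictMono_succAbove i) hkl))

/-- The matrix whose first row is `t i ^ n` and whose remaining rows are the
moment rows `t i ^ k` for `k = 0, …, m`. -/
noncomputable def Mrow (t : Fin (m + 2) → ℝ) (n : ℕ) :
    Matrix (Fin (m + 2)) (Fin (m + 2)) ℝ :=
  fun j i => Fin.cases (t i ^ n) (fun k => t i ^ (k : ℕ)) j

lemma laplace (t : Fin (m + 2) → ℝ) (n : ℕ) :
    (Mrow t n).det = ∑ i : Fin (m + 2), (-1 : ℝ) ^ (i : ℕ) * t i ^ n * Dm t i := by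
  rw [Matrix.det_succ_row_zero]
  refine Finset.sum_congr rfl fun i _ => ?_
  have h1 : (Mrow t n) 0 i = t i ^ n := rfl
  have h2 : ((Mrow t n).submatrix Fin.succ i.succAbove)
      = (Matrix.vandermonde fun l : Fin (m + 1) => t (i.succAbove l))ᵀ := by
    ext k l
    simp [Mrow, Matrix.submatrix, Matrix.vandermonde, Matrix.transpose]
  rw [h1, h2, Matrix.det_transpose, Dm]

lemma laplace_zero (t : Fin (m + 2) → ℝ) {n : ℕ} (hn : n ≤ m) :
    ∑ i : Fin (m + 2), (-1 : ℝ) ^ (i : ℕ) * t i ^ n * Dm t i = 0 := by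
  rw [← laplace]
  refine Matrix.det_zero_of_row_eq (i := 0) (j := (⟨n, by omega⟩ : Fin (m + 1)).succ)
    (Fin.succ_ne_zero _).symm ?_
  ext i
  show t i ^ n = t i ^ ((⟨n, by omega⟩ : Fin (m + 1)) : ℕ)
  rfl

lemma laplace_top {t : Fin (m + 2) → ℝ} (ht : StrictMono t) :
    ∑ i : Fin (m + 2), (-1 : ℝ) ^ (i : ℕ) * t i ^ (m + 1) * Dm t i ≠ 0 := by
  rw [← laplace]
  set σ : Equiv.Perm (Fin (m + 2)) := (finRotate (m + 2)).symm with hσ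
  have hrow : Mrow t (m + 1) = ((Matrix.vandermonde t)ᵀ).submatrix σ id := by
    ext j i
    refine Fin.cases ?_ (fun k => ?_) j
    · have h0 : σ 0 = Fin.last (m + 1) := by
        rw [hσ, Equiv.symm_apply_eq, finRotate_last]
      show t i ^ (m + 1) = ((Matrix.vandermonde t)ᵀ).submatrix σ id 0 i
      rw [Matrix.submatrix_apply, h0]
      simp [Matrix.vandermonde, Fin.last]
    · have hk : σ k.succ = k.castSucc := by
        rw [hσ, Equiv.symm_apply_eq, finRotate_succ_apply, Fin.coeSucc_eq_succ]
      show t i ^ (k : ℕ) = ((Matrix.vandermonde t)ᵀ).submatrix σ id k.succ i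
      rw [Matrix.submatrix_apply, hk]
      simp [Matrix.vandermonde]
  rw [hrow, Matrix.det_permute, Matrix.det_transpose]
  have hdet : (Matrix.vandermonde t).det ≠ 0 :=
    Matrix.det_vandermonde_ne_zero_iff.mpr ht.injective
  have hsign : ((Equiv.Perm.sign σ : ℤ) : ℝ) ≠ 0 := by
    rcases Int.units_eq_one_or (Equiv.Perm.sign σ) with h | h <;> simp [h]
  exact mul_ne_zero hsign hdet

/-- Any normalized coefficient vector in the kernel of the alternating moment map
is given by the normalized minor determinants. -/
lemma coeff_unique {t : Fin (m + 2) → ℝ} (ht : StrictMono t) (lam : Fin (m + 2) → ℝ)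
    (hsum : ∑ i, lam i = 1)
    (hker : ∀ n : ℕ, n ≤ m → ∑ i, lam i * ((-1 : ℝ) ^ (i : ℕ) * t i ^ n) = 0) :
    lam = fun i => Dm t i / ∑ k, Dm t k := by
  set S : ℝ := ∑ k, Dm t k with hS
  have hSpos : 0 < S := Finset.sum_pos (fun i _ => Dm_pos ht i) Finset.univ_nonempty
  set e : Fin (m + 2) → ℝ := fun i => (-1 : ℝ) ^ (i : ℕ) * Dm t i with he
  set μ : Fin (m + 2) → ℝ := fun i => (-1 : ℝ) ^ (i : ℕ) * lam i with hμ
  set s' : ℝ := ∑ i, t i ^ (m + 1) * e i with hs'def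
  set s : ℝ := ∑ i, t i ^ (m + 1) * μ i with hsdef
  have hs' : s' ≠ 0 := by
    have h := laplace_top ht
    have heq : s' = ∑ i : Fin (m + 2), (-1 : ℝ) ^ (i : ℕ) * t i ^ (m + 1) * Dm t i :=
      Finset.sum_congr rfl fun i _ => by rw [he]; ring
    rw [heq]
    exact h
  -- the square Vandermonde (transposed) matrix
  set W : Matrix (Fin (m + 2)) (Fin (m + 2)) ℝ := (Matrix.vandermonde t)ᵀ with hW
  have hWdet : W.det ≠ 0 := by
    rw [hW, Matrix.det_transpose]
    exact Matrix.det_vandermonde_ne_zero_iff.mpr ht.injective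
  set w : Fin (m + 2) → ℝ := fun i => s' * μ i - s * e i with hw
  have hμker : ∀ n : ℕ, n ≤ m → ∑ i, t i ^ n * μ i = 0 := by
    intro n hn
    have := hker n hn
    rw [← this]
    refine Finset.sum_congr rfl fun i _ => ?_
    rw [hμ]; ring
  have heker : ∀ n : ℕ, n ≤ m → ∑ i, t i ^ n * e i = 0 := by
    intro n hn
    have := laplace_zero t (n := n) hn
    rw [← this]
    refine Finset.sum_congr rfl fun i _ => ?_
    rw [he]; ring
  have hmul : W *ᵥ w = 0 := by
    funext j
    have hexp : (W *ᵥ w) j = s' * (∑ i, t i ^ (j : ℕ) * μ i)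
        - s * (∑ i, t i ^ (j : ℕ) * e i) := by
      rw [Matrix.mulVec, dotProduct, Finset.mul_sum, Finset.mul_sum, ← Finset.sum_sub_distrib]
      refine Finset.sum_congr rfl fun i _ => ?_
      show t i ^ (j : ℕ) * w i = _
      rw [hw]
      ring
    rw [hexp]
    refine Fin.lastCases ?_ (fun k => ?_) j
    · have hlast : ((Fin.last (m + 1) : Fin (m + 2)) : ℕ) = m + 1 := rfl
      rw [hlast, ← hsdef, ← hs'def]
      show s' * s - s * s' = (0 : Fin (m + 2) → ℝ) (Fin.last (m + 1))
      simp [mul_comm]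
    · have hcast : ((k.castSucc : Fin (m + 2)) : ℕ) = (k : ℕ) := rfl
      have hk : (k : ℕ) ≤ m := by omega
      rw [hcast, hμker _ hk, heker _ hk]
      simp
  have hw0 : w = 0 := Matrix.eq_zero_of_mulVec_eq_zero hWdet hmul
  -- hence s' * lam i = s * Dm t i for all i
  have hprop : ∀ i, s' * lam i = s * Dm t i := by
    intro i
    have h0 : w i = 0 := by rw [hw0]; rfl
    rw [hw, hμ, he] at h0
    have hpow : ((-1 : ℝ) ^ (i : ℕ)) ≠ 0 :=
      pow_ne_zero _ (by norm_num)
    have : (-1 : ℝ) ^ (i : ℕ) * (s' * lam i - s * Dm t i) = 0 := by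
      rw [← h0]; ring
    have := mul_eq_zero.mp this
    rcases this with h | h
    · exact absurd h hpow
    · linarith
  have hssum : s' = s * S := by
    have : ∑ i, s' * lam i = ∑ i, s * Dm t i :=
      Finset.sum_congr rfl fun i _ => hprop i
    rw [← Finset.mul_sum, ← Finset.mul_sum, hsum, mul_one] at this
    rw [this, hS]
  have hsne : s ≠ 0 := by
    intro h
    rw [h, zero_mul] at hssum
    exact hs' hssum
  funext i
  have := hprop i
  rw [hssum] at this
  have : S * lam i = Dm t i := by
    have := mul_left_cancel₀ hsne (by linarith : s * (S * lam i) = s * Dm t i)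
    exact this
  field_simp
  linarith

end ZeroHullAux

open ZeroHullAux in
/-- For `m+2` distinct nodes, `0` lies in the convex hull of the alternately
signed moment vectors `(-1)^i (1, t_i, …, t_i^m)`, and the convex coefficients
representing `0` are strictly positive and unique. -/
theorem zero_in_hull_signed_moment_vectors (m : ℕ)
    (t : Fin (m + 2) → ℝ) (ht : StrictMono t) :
    (0 : Fin (m + 1) → ℝ) ∈ convexHull ℝ
      (Set.range fun i : Fin (m + 2) =>
        ((-1 : ℝ) ^ (i : ℕ)) • fun j : Fin (m + 1) => t i ^ (j : ℕ)) ∧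
    (∀ lam : Fin (m + 2) → ℝ,
      (∀ i, 0 ≤ lam i) → (∑ i, lam i = 1) →
      (∑ i, lam i • (((-1 : ℝ) ^ (i : ℕ)) • fun j : Fin (m + 1) => t i ^ (j : ℕ)))
        = 0 →
      ∀ i, 0 < lam i) ∧
    (∀ lam mu : Fin (m + 2) → ℝ,
      (∀ i, 0 ≤ lam i) → (∑ i, lam i = 1) →
      (∑ i, lam i • (((-1 : ℝ) ^ (i : ℕ)) • fun j : Fin (m + 1) => t i ^ (j : ℕ)))
        = 0 →
      (∀ i, 0 ≤ mu i) → (∑ i, mu i = 1) →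
      (∑ i, mu i • (((-1 : ℝ) ^ (i : ℕ)) • fun j : Fin (m + 1) => t i ^ (j : ℕ)))
        = 0 →
      lam = mu) := by
  set f : Fin (m + 2) → (Fin (m + 1) → ℝ) :=
    fun i => ((-1 : ℝ) ^ (i : ℕ)) • fun j : Fin (m + 1) => t i ^ (j : ℕ) with hf
  set S : ℝ := ∑ k, Dm t k with hS
  have hSpos : 0 < S := Finset.sum_pos (fun i _ => Dm_pos ht i) Finset.univ_nonempty
  set lam0 : Fin (m + 2) → ℝ := fun i => Dm t i / S with hlam0
  have hsum0 : ∑ i, lam0 i = 1 := by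
    rw [hlam0, ← Finset.sum_div, ← hS, div_self hSpos.ne']
  have hpos0 : ∀ i, 0 < lam0 i := fun i => div_pos (Dm_pos ht i) hSpos
  have hcomb : ∑ i, lam0 i • f i = 0 := by
    funext j
    have hj : (j : ℕ) ≤ m := by omega
    have hzero := laplace_zero t (n := (j : ℕ)) hj
    have : (∑ i, lam0 i • f i) j = ∑ i, lam0 i * ((-1 : ℝ) ^ (i : ℕ) * t i ^ (j : ℕ)) := by
      rw [Finset.sum_apply]
      refine Finset.sum_congr rfl fun i _ => ?_
      simp [hf, mul_assoc]
    rw [this]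
    have : ∑ i : Fin (m + 2), lam0 i * ((-1 : ℝ) ^ (i : ℕ) * t i ^ (j : ℕ))
        = (∑ i : Fin (m + 2), (-1 : ℝ) ^ (i : ℕ) * t i ^ (j : ℕ) * Dm t i) / S := by
      rw [Finset.sum_div]
      refine Finset.sum_congr rfl fun i _ => ?_
      rw [hlam0]
      ring
    rw [this, hzero, zero_div]
    rfl
  -- a generic coefficient vector satisfying the constraints equals lam0
  have key : ∀ lam : Fin (m + 2) → ℝ, (∑ i, lam i = 1) →
      (∑ i, lam i • f i) = 0 → lam = lam0 := by
    intro lam hsum heq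
    refine coeff_unique ht lam hsum fun n hn => ?_
    have hj := congrFun heq ⟨n, by omega⟩
    rw [Finset.sum_apply] at hj
    have : ∑ i : Fin (m + 2), (lam i • f i) (⟨n, by omega⟩ : Fin (m + 1))
        = ∑ i : Fin (m + 2), lam i * ((-1 : ℝ) ^ (i : ℕ) * t i ^ n) := by
      refine Finset.sum_congr rfl fun i _ => ?_
      simp [hf, mul_assoc]
    rw [this] at hj
    exact hj
  refine ⟨?_, ?_, ?_⟩
  · have hmem := Finset.centerMass_mem_convexHull (Finset.univ : Finset (Fin (m + 2)))
      (w := lam0) (z := f) (fun i _ => (hpos0 i).le)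
      (by rw [hsum0]; exact one_pos) (fun i _ => Set.mem_range_self i)
    rwa [Finset.centerMass_eq_of_sum_1 _ _ hsum0, hcomb] at hmem
  · intro lam _ hsum heq i
    rw [key lam hsum heq]
    exact hpos0 i
  · intro lam mu _ hlsum hleq _ hmsum hmeq
    rw [key lam hlsum hleq, key mu hmsum hmeq]
end
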